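/- arXiv:math/0004112 — 2 statements merged into one kernel-verified Lean document; each statement's English description precedes it below -/
import Mathlib

section
/- (Fliess) Let M be a finite-dimensional k-vector space with a k⟨X⟩-module structure (u_1, …, u_μ). Let m ∈ M be such that the smallest subspace of M containing m and invariant under every u_i is all of M, and let φ be an element of the dual space M* such that the smallest subspace of M* containing φ and stable under every transpose map u_i* is all of M*. Define the linear map Φ : M → (FreeMonoid (Fin μ) → k) by Φ(m')(w) = φ(α(w) m'), and set S = Φ(m). Then: Φ is injective; Φ ∘ u_i = ∂_i ∘ Φ for every i; the image of Φ equals M_S; Φ(m) = S; and Φ(m') evaluated at the empty word equals φ(m') for every m' ∈ M. In particular M_S, with the endomorphisms ∂_1, …, ∂_μ, is isomorphic as a k⟨X⟩-module structure to M, with m corresponding to S and the evaluation-at-the-empty-word functional corresponding to φ. -/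
noncomputable section

variable (k : Type*) [Field k] (μ : ℕ)

/-- The Fox derivative `∂ᵢ` on noncommutative formal series. -/
def fox (i : Fin μ) : (FreeMonoid (Fin μ) → k) →ₗ[k] (FreeMonoid (Fin μ) → k) where
  toFun S := fun w => S (FreeMonoid.of i * w)
  map_add' _ _ := rfl
  map_smul' _ _ := rfl

/-- `M_S`: the smallest subspace containing `S` and invariant under all Fox derivatives. -/
def seriesModule (S : FreeMonoid (Fin μ) → k) : Submodule k (FreeMonoid (Fin μ) → k) :=
  sInf {p | S ∈ p ∧ ∀ i : Fin μ, ∀ f ∈ p, fox k μ i f ∈ p}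

lemma fox_mem_seriesModule {S f : FreeMonoid (Fin μ) → k}
    (hf : f ∈ seriesModule k μ S) (i : Fin μ) : fox k μ i f ∈ seriesModule k μ S := by
  rw [seriesModule, Submodule.mem_sInf] at hf ⊢
  exact fun p hp => hp.2 i f (hf p hp)

/-- The Fox derivatives viewed as endomorphisms of `M_S`. -/
def foxOn (S : FreeMonoid (Fin μ) → k) (i : Fin μ) : Module.End k (seriesModule k μ S) :=
  (fox k μ i).restrict (fun f hf => fox_mem_seriesModule k μ hf i)

variable {M : Type*} [AddCommGroup M] [Module k M]

/-- For a word `w = x_{i₁} ⋯ x_{i_p}`, `alpha u w = u_{i_p} ∘ ⋯ ∘ u_{i₁}`. -/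
def alpha (u : Fin μ → Module.End k M) (w : FreeMonoid (Fin μ)) : Module.End k M :=
  (FreeMonoid.toList w).foldl (fun acc i => u i * acc) 1

/-- The characteristic series of a module structure. -/
def chi (u : Fin μ → Module.End k M) : FreeMonoid (Fin μ) → k :=
  fun w => LinearMap.trace k M (alpha k μ u w)

/-- A module structure is simple if it is nonzero and has no proper nonzero
invariant subspaces. -/
def IsSimpleStruct (u : Fin μ → Module.End k M) : Prop :=
  (∃ x : M, x ≠ 0) ∧
    ∀ p : Submodule k M, (∀ i : Fin μ, ∀ x ∈ p, u i x ∈ p) → p = ⊥ ∨ p = ⊤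

/-- A module structure is semisimple if the space is an internal direct sum of
simple invariant subspaces. -/
def IsSemisimpleStruct (u : Fin μ → Module.End k M) : Prop :=
  ∃ (n : ℕ) (s : Fin n → Submodule k M) (hs : ∀ r i, ∀ x ∈ s r, u i x ∈ s r),
    DirectSum.IsInternal s ∧
      ∀ r, IsSimpleStruct k μ (fun i => (u i).restrict (fun x hx => hs r i x hx))

end


noncomputable section

variable (k : Type*) [Field k] (μ : ℕ)

/-- The smallest subspace containing `x` and invariant under all the endomorphisms `v i`. -/
def genSub {V : Type*} [AddCommGroup V] [Module k V]
    (v : Fin μ → Module.End k V) (x : V) : Submodule k V :=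
  sInf {p | x ∈ p ∧ ∀ i : Fin μ, ∀ y ∈ p, v i y ∈ p}

variable {M : Type*} [AddCommGroup M] [Module k M]

/-- The map `Φ : M → (FreeMonoid (Fin μ) → k)`, `Φ(m')(w) = φ(α(w) m')`. -/
def PhiMap (u : Fin μ → Module.End k M) (φ : Module.Dual k M) :
    M →ₗ[k] (FreeMonoid (Fin μ) → k) where
  toFun m' := fun w => φ (alpha k μ u w m')
  map_add' a b := by funext w; simp [map_add]
  map_smul' c a := by funext w; simp

end


section FliessAux

variable {k : Type*} [Field k] {μ : ℕ} {M : Type*} [AddCommGroup M] [Module k M]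

lemma fliess_foldl_mul (u : Fin μ → Module.End k M) (l : List (Fin μ)) (a : Module.End k M) :
    l.foldl (fun acc i => u i * acc) a = l.foldl (fun acc i => u i * acc) 1 * a := by
  induction l generalizing a with
  | nil => simp
  | cons i l ih =>
    simp only [List.foldl_cons]
    rw [ih (u i * a), ih (u i * 1)]
    simp [mul_assoc]

lemma fliess_alpha_of_mul (u : Fin μ → Module.End k M) (i : Fin μ) (w : FreeMonoid (Fin μ)) :
    alpha k μ u (FreeMonoid.of i * w) = alpha k μ u w * u i := by
  have h : FreeMonoid.toList (FreeMonoid.of i * w) = i :: FreeMonoid.toList w := rfl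
  rw [alpha, h, List.foldl_cons, fliess_foldl_mul]
  simp [alpha]

lemma fliess_alpha_one (u : Fin μ → Module.End k M) : alpha k μ u 1 = 1 := rfl

end FliessAux

/-- Fliess: if `m` generates `M` and `φ` generates the dual `M*`
(under the transposed action), then `Φ` is an injective intertwiner identifying
`M` with `M_S`, where `S = Φ(m)`; moreover `Φ(m')(1) = φ(m')`. -/
theorem fliess
    (k : Type*) [Field k] (μ : ℕ) (hμ : 1 ≤ μ)
    (M : Type*) [AddCommGroup M] [Module k M] [FiniteDimensional k M]
    (u : Fin μ → Module.End k M)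
    (m : M) (hm : genSub k μ u m = ⊤)
    (φ : Module.Dual k M)
    (hφ : genSub k μ (fun i => (u i).dualMap) φ = ⊤) :
    Function.Injective (PhiMap k μ u φ) ∧
      (∀ (i : Fin μ) (x : M), PhiMap k μ u φ (u i x) = fox k μ i (PhiMap k μ u φ x)) ∧
      LinearMap.range (PhiMap k μ u φ) = seriesModule k μ (PhiMap k μ u φ m) ∧
      (∀ x : M, PhiMap k μ u φ x 1 = φ x) := by

  set Φ := PhiMap k μ u φ with hΦ
  have hinter : ∀ (i : Fin μ) (x : M), Φ (u i x) = fox k μ i (Φ x) := by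
    intro i x
    funext w
    show φ (alpha k μ u w (u i x)) = φ (alpha k μ u (FreeMonoid.of i * w) x)
    rw [fliess_alpha_of_mul]
    rfl
  have hone : ∀ x : M, Φ x 1 = φ x := by
    intro x
    show φ (alpha k μ u 1 x) = φ x
    rw [fliess_alpha_one]
    rfl
  have hker_inv : ∀ i : Fin μ, ∀ x ∈ LinearMap.ker Φ, u i x ∈ LinearMap.ker Φ := by
    intro i x hx
    rw [LinearMap.mem_ker] at hx ⊢
    rw [hinter, hx, map_zero]
  have hinj : Function.Injective Φ := by
    rw [← LinearMap.ker_eq_bot]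
    have hle : genSub k μ (fun i => (u i).dualMap) φ ≤ (LinearMap.ker Φ).dualAnnihilator := by
      apply sInf_le
      constructor
      · rw [Submodule.mem_dualAnnihilator]
        intro x hx
        rw [LinearMap.mem_ker] at hx
        have := congrFun hx 1
        rw [hone] at this
        simpa using this
      · intro i ψ hψ
        rw [Submodule.mem_dualAnnihilator] at hψ ⊢
        intro x hx
        exact hψ (u i x) (hker_inv i x hx)
    rw [hφ, top_le_iff] at hle
    rw [Submodule.eq_bot_iff]
    intro x hx
    rw [← Module.forall_dual_apply_eq_zero_iff k x]
    intro ψ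
    have hψ : ψ ∈ (LinearMap.ker Φ).dualAnnihilator := hle ▸ Submodule.mem_top
    exact (Submodule.mem_dualAnnihilator ψ).mp hψ x hx
  have hrange : LinearMap.range Φ = seriesModule k μ (Φ m) := by
    apply le_antisymm
    · rintro _ ⟨x, rfl⟩
      have hle : genSub k μ u m ≤ (seriesModule k μ (Φ m)).comap Φ := by
        apply sInf_le
        constructor
        · rw [Submodule.mem_comap, seriesModule, Submodule.mem_sInf]
          exact fun p hp => hp.1
        · intro i y hy
          rw [Submodule.mem_comap] at hy ⊢
          rw [hinter]
          exact fox_mem_seriesModule k μ hy i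
      rw [hm, top_le_iff] at hle
      exact (hle ▸ Submodule.mem_top : x ∈ (seriesModule k μ (Φ m)).comap Φ)
    · apply sInf_le
      constructor
      · exact ⟨m, rfl⟩
      · rintro i _ ⟨x, rfl⟩
        exact ⟨u i x, hinter i x⟩
  exact ⟨hinj, hinter, hrange, hone⟩
end

section
/- Let M be a finitely generated left Λ-module such that β_M is bijective. Then M contains a lattice: there exists a k-subspace A of M, finite-dimensional over k, with π_i(A) ⊆ A for every i, z(A) ⊆ A, and Λ·A = M. -/
noncomputable section

variable (k : Type*) [Field k] (μ : ℕ)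

/-- The group algebra `Λ = k[F_μ]` of the free group on `μ` generators. -/
abbrev Lam := MonoidAlgebra k (FreeGroup (Fin μ))

/-- The generator `g_i` of the free group, viewed inside `Λ`. -/
def gel (i : Fin μ) : Lam k μ := MonoidAlgebra.of k (FreeGroup (Fin μ)) (FreeGroup.of i)

variable {M : Type*} [AddCommGroup M] [Module (Lam k μ) M]

/-- The map `β_M : M^μ → M`, `(m_1, …, m_μ) ↦ ∑ (g_i - 1)·m_i`. -/
def betaM : (Fin μ → M) → M := fun m => ∑ i, (gel k μ i - 1) • m i

/-- The inverse of `β_M`, when `β_M` is bijective. -/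
def betaInv (hβ : Function.Bijective (betaM k μ (M := M))) : M → (Fin μ → M) :=
  (Equiv.ofBijective _ hβ).symm

/-- The operator `π_i : M → M`, `π_i(m) = (g_i - 1)·(β_M⁻¹ m)_i`. -/
def piMap (hβ : Function.Bijective (betaM k μ (M := M))) (i : Fin μ) : M → M :=
  fun m => (gel k μ i - 1) • betaInv k μ hβ m i

/-- The operator `z : M → M`, `z(m) = ∑ (β_M⁻¹ m)_i`. -/
def zMap (hβ : Function.Bijective (betaM k μ (M := M))) : M → M :=
  fun m => ∑ i, betaInv k μ hβ m i

end

set_option linter.unusedSectionVars false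

noncomputable section Aux

variable {k : Type*} [Field k] {μ : ℕ} {M : Type*} [AddCommGroup M] [Module k M]
  [Module (Lam k μ) M] [IsScalarTower k (Lam k μ) M]

lemma betaM_add (x y : Fin μ → M) : betaM k μ (x + y) = betaM k μ x + betaM k μ y := by
  simp [betaM, smul_add, Finset.sum_add_distrib]

lemma betaM_sub (x y : Fin μ → M) : betaM k μ (x - y) = betaM k μ x - betaM k μ y := by
  simp [betaM, smul_sub, Finset.sum_sub_distrib]

lemma betaM_smul (c : k) (x : Fin μ → M) : betaM k μ (c • x) = c • betaM k μ x := by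
  simp [betaM, Finset.smul_sum, smul_comm c]

variable (hβ : Function.Bijective (betaM k μ (M := M)))

lemma beta_betaInv (m : M) : betaM k μ (betaInv k μ hβ m) = m :=
  (Equiv.ofBijective _ hβ).apply_symm_apply m

lemma betaInv_eq (x : Fin μ → M) (m : M) (h : betaM k μ x = m) : betaInv k μ hβ m = x :=
  hβ.injective (by rw [beta_betaInv]; exact h.symm)

lemma betaInv_add (m m' : M) :
    betaInv k μ hβ (m + m') = betaInv k μ hβ m + betaInv k μ hβ m' :=
  betaInv_eq hβ _ _ (by rw [betaM_add, beta_betaInv, beta_betaInv])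

lemma betaInv_smul (c : k) (m : M) : betaInv k μ hβ (c • m) = c • betaInv k μ hβ m :=
  betaInv_eq hβ _ _ (by rw [betaM_smul, beta_betaInv])

lemma betaM_single (i : Fin μ) (m : M) :
    betaM k μ (Pi.single i m) = (gel k μ i - 1) • m := by
  unfold betaM
  rw [Finset.sum_eq_single i]
  · simp
  · intro j _ hj; rw [Pi.single_eq_of_ne hj, smul_zero]
  · simp

lemma betaInv_tsmul (i : Fin μ) (m : M) :
    betaInv k μ hβ ((gel k μ i - 1) • m) = Pi.single i m :=
  betaInv_eq hβ _ _ (betaM_single i m)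

lemma betaInv_gsmul (j : Fin μ) (m : M) :
    betaInv k μ hβ (gel k μ j • m) = betaInv k μ hβ m + Pi.single j m :=
  betaInv_eq hβ _ _ (by
    rw [betaM_add, beta_betaInv, betaM_single, sub_smul, one_smul]; abel)

lemma betaInv_ginv (j : Fin μ) (m m' : M) (h : gel k μ j • m' = m) :
    betaInv k μ hβ m' = betaInv k μ hβ m - Pi.single j m' :=
  betaInv_eq hβ _ _ (by
    rw [betaM_sub, beta_betaInv, betaM_single, sub_smul, one_smul, ← h]; abel)

/-- `B i m = (β⁻¹ m) i` as a `k`-linear map. -/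
def Bmap (i : Fin μ) : M →ₗ[k] M where
  toFun m := betaInv k μ hβ m i
  map_add' m m' := by
    show betaInv k μ hβ (m + m') i = betaInv k μ hβ m i + betaInv k μ hβ m' i
    rw [betaInv_add]; rfl
  map_smul' c m := by
    show betaInv k μ hβ (c • m) i = c • betaInv k μ hβ m i
    rw [betaInv_smul]; rfl

@[simp] lemma Bmap_apply (i : Fin μ) (m : M) : Bmap hβ i m = betaInv k μ hβ m i := rfl

/-- Scalar action by `u : Λ` as a `k`-linear map. -/
def Lsm (u : Lam k μ) : M →ₗ[k] M where
  toFun m := u • m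
  map_add' := smul_add u
  map_smul' c m := by simpa using smul_comm u c m

@[simp] lemma Lsm_apply (u : Lam k μ) (m : M) : Lsm u m = u • m := rfl

variable (S : Finset M)

def Dsub : Submodule k M :=
  Submodule.span k ((S : Set M) ∪ ⋃ i : Fin μ, (fun s => Bmap hβ i s) '' (S : Set M))

lemma Dsub_fd : FiniteDimensional k (Dsub hβ S) :=
  FiniteDimensional.span_of_finite k <|
    S.finite_toSet.union (Set.finite_iUnion fun i => S.finite_toSet.image _)

def GoodW (W : Submodule k M) : Prop :=
  FiniteDimensional k W ∧ ∀ i : Fin μ, ∀ x ∈ W, Bmap hβ i x ∈ W ⊔ Dsub hβ S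

def Good (m : M) : Prop := ∃ W, GoodW hβ S W ∧ m ∈ W


lemma sup_mono_mem {W W' D : Submodule k M} (h : W ≤ W') {x : M} (hx : x ∈ W ⊔ D) :
    x ∈ W' ⊔ D :=
  sup_le_sup_right h D hx

lemma goodW_sup {W₁ W₂ : Submodule k M} (h₁ : GoodW hβ S W₁) (h₂ : GoodW hβ S W₂) :
    GoodW hβ S (W₁ ⊔ W₂) := by
  obtain ⟨hf₁, hb₁⟩ := h₁
  obtain ⟨hf₂, hb₂⟩ := h₂
  refine ⟨inferInstance, fun i x hx => ?_⟩
  obtain ⟨a, ha, b, hb, rfl⟩ := Submodule.mem_sup.1 hx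
  rw [map_add]
  exact add_mem
    (sup_mono_mem le_sup_left (hb₁ i a ha))
    (sup_mono_mem le_sup_right (hb₂ i b hb))

lemma good_zero : Good hβ S (0 : M) := by
  refine ⟨⊥, ⟨inferInstance, fun i x hx => ?_⟩, Submodule.zero_mem _⟩
  rw [Submodule.mem_bot] at hx
  subst hx
  rw [map_zero]
  exact Submodule.zero_mem _

lemma good_add {m m' : M} (h : Good hβ S m) (h' : Good hβ S m') : Good hβ S (m + m') := by
  obtain ⟨W₁, hW₁, hm₁⟩ := h
  obtain ⟨W₂, hW₂, hm₂⟩ := h'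
  exact ⟨W₁ ⊔ W₂, goodW_sup hβ S hW₁ hW₂,
    add_mem (Submodule.mem_sup_left hm₁) (Submodule.mem_sup_right hm₂)⟩

lemma good_ksmul (c : k) {m : M} (h : Good hβ S m) : Good hβ S (c • m) := by
  obtain ⟨W, hW, hm⟩ := h
  exact ⟨W, hW, W.smul_mem c hm⟩

lemma good_gel (j : Fin μ) {m : M} (h : Good hβ S m) : Good hβ S (gel k μ j • m) := by
  obtain ⟨W, ⟨hfd, hB⟩, hm⟩ := h
  refine ⟨W ⊔ Submodule.map (Lsm (gel k μ j)) W, ⟨inferInstance, fun i => ?_⟩,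
    Submodule.mem_sup_right ⟨m, hm, rfl⟩⟩
  have key : W ⊔ Submodule.map (Lsm (gel k μ j)) W ≤
      Submodule.comap (Bmap hβ i)
        (W ⊔ Submodule.map (Lsm (gel k μ j)) W ⊔ Dsub hβ S) := by
    refine sup_le (fun x hx => Submodule.mem_comap.2 ?_)
      (Submodule.map_le_iff_le_comap.2 fun w hw => Submodule.mem_comap.2 (Submodule.mem_comap.2 ?_))
    · exact sup_mono_mem le_sup_left (hB i x hx)
    · show Bmap hβ i (Lsm (gel k μ j) w) ∈ _
      rw [Bmap_apply, Lsm_apply, betaInv_gsmul]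
      refine add_mem ?_ ?_
      · exact sup_mono_mem le_sup_left (hB i w hw)
      · by_cases hij : i = j
        · subst hij
          rw [Pi.single_eq_same]
          exact Submodule.mem_sup_left (Submodule.mem_sup_left hw)
        · rw [Pi.single_eq_of_ne hij]
          exact Submodule.zero_mem _
  exact fun x hx => Submodule.mem_comap.1 (key hx)

lemma good_ginv (j : Fin μ) {m : M} (h : Good hβ S m) :
    Good hβ S ((MonoidAlgebra.of k (FreeGroup (Fin μ)) (FreeGroup.of j)⁻¹) • m) := by
  set v : Lam k μ := MonoidAlgebra.of k (FreeGroup (Fin μ)) (FreeGroup.of j)⁻¹ with hv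
  have hgv : ∀ x : M, gel k μ j • (v • x) = x := by
    intro x
    rw [← mul_smul, gel, ← map_mul, mul_inv_cancel, map_one, one_smul]
  obtain ⟨W, ⟨hfd, hB⟩, hm⟩ := h
  refine ⟨W ⊔ Submodule.map (Lsm v) W, ⟨inferInstance, fun i => ?_⟩,
    Submodule.mem_sup_right ⟨m, hm, rfl⟩⟩
  have key : W ⊔ Submodule.map (Lsm v) W ≤
      Submodule.comap (Bmap hβ i) (W ⊔ Submodule.map (Lsm v) W ⊔ Dsub hβ S) := by
    refine sup_le (fun x hx => Submodule.mem_comap.2 ?_)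
      (Submodule.map_le_iff_le_comap.2 fun w hw => Submodule.mem_comap.2 (Submodule.mem_comap.2 ?_))
    · exact sup_mono_mem le_sup_left (hB i x hx)
    · show Bmap hβ i (Lsm v w) ∈ _
      rw [Bmap_apply, Lsm_apply, betaInv_ginv hβ j w (v • w) (hgv w), Pi.sub_apply]
      refine sub_mem ?_ ?_
      · exact sup_mono_mem le_sup_left (hB i w hw)
      · by_cases hij : i = j
        · subst hij
          rw [Pi.single_eq_same]
          exact Submodule.mem_sup_left (Submodule.mem_sup_right ⟨w, hw, rfl⟩)
        · rw [Pi.single_eq_of_ne hij]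
          exact Submodule.zero_mem _
  exact fun x hx => Submodule.mem_comap.1 (key hx)

lemma good_freegroup (u : FreeGroup (Fin μ)) :
    ∀ m : M, Good hβ S m → Good hβ S ((MonoidAlgebra.of k (FreeGroup (Fin μ)) u) • m) := by
  induction u using FreeGroup.induction_on with
  | C1 => intro m hm; rwa [map_one, one_smul]
  | of x => intro m hm; exact good_gel hβ S x hm
  | inv_of x _ => intro m hm; exact good_ginv hβ S x hm
  | mul x y hx hy =>
      intro m hm
      rw [map_mul, mul_smul]
      exact hx _ (hy _ hm)

lemma good_lsmul (u : Lam k μ) : ∀ m : M, Good hβ S m → Good hβ S (u • m) := by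
  induction u using MonoidAlgebra.induction_on with
  | of g => exact good_freegroup hβ S g
  | add f g hf hg =>
      intro m hm
      rw [add_smul]
      exact good_add hβ S (hf m hm) (hg m hm)
  | smul r f hf =>
      intro m hm
      rw [smul_assoc]
      exact good_ksmul hβ S r (hf m hm)

lemma good_gen {m : M} (hm : m ∈ S) : Good hβ S m := by
  refine ⟨Submodule.span k (S : Set M),
    ⟨FiniteDimensional.span_of_finite k S.finite_toSet, fun i => ?_⟩,
    Submodule.subset_span hm⟩
  have key : Submodule.span k (S : Set M) ≤
      Submodule.comap (Bmap hβ i) (Submodule.span k (S : Set M) ⊔ Dsub hβ S) := by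
    rw [Submodule.span_le]
    intro s hs
    refine Submodule.mem_comap.2 (Submodule.mem_sup_right (Submodule.subset_span ?_))
    exact Set.mem_union_right _ (Set.mem_iUnion.2 ⟨i, ⟨s, hs, rfl⟩⟩)
  exact fun x hx => Submodule.mem_comap.1 (key hx)

lemma good_all (hS : Submodule.span (Lam k μ) (S : Set M) = ⊤) (m : M) : Good hβ S m := by
  have hm : m ∈ Submodule.span (Lam k μ) (S : Set M) := hS ▸ Submodule.mem_top
  induction hm using Submodule.span_induction with
  | mem x hx => exact good_gen hβ S hx
  | zero => exact good_zero hβ S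
  | add x y _ _ hx hy => exact good_add hβ S hx hy
  | smul a x _ hx => exact good_lsmul hβ S a x hx

lemma goodW_finset (hS : Submodule.span (Lam k μ) (S : Set M) = ⊤) (F : Finset M) :
    ∃ W : Submodule k M, GoodW hβ S W ∧ (F : Set M) ⊆ W := by
  classical
  induction F using Finset.induction_on with
  | empty =>
      refine ⟨⊥, ⟨inferInstance, fun i x hx => ?_⟩, by simp⟩
      rw [Submodule.mem_bot] at hx; subst hx
      rw [map_zero]; exact Submodule.zero_mem _
  | @insert a F _ ih =>
      obtain ⟨W, hW, hF⟩ := ih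
      obtain ⟨Wa, hWa, ha⟩ := good_all hβ S hS a
      refine ⟨W ⊔ Wa, goodW_sup hβ S hW hWa, ?_⟩
      intro x hx
      rcases Finset.mem_insert.1 hx with rfl | hx
      · exact Submodule.mem_sup_right ha
      · exact Submodule.mem_sup_left (hF hx)



end Aux


/-- every finitely generated `Λ`-module with `β_M` bijective contains a
lattice: a finite-dimensional `k`-subspace invariant under the `π_i` and `z` which
generates `M` over `Λ`. -/
theorem lattice_exists
    (k : Type*) [Field k] (μ : ℕ) (hμ : 1 ≤ μ)
    (M : Type*) [AddCommGroup M] [Module k M] [Module (Lam k μ) M]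
    [IsScalarTower k (Lam k μ) M] [Module.Finite (Lam k μ) M]
    (hβ : Function.Bijective (betaM k μ (M := M))) :
    ∃ A : Submodule k M,
      FiniteDimensional k A ∧
        (∀ i : Fin μ, ∀ x ∈ A, piMap k μ hβ i x ∈ A) ∧
        (∀ x ∈ A, zMap k μ hβ x ∈ A) ∧
        Submodule.span (Lam k μ) (A : Set M) = ⊤ := by
  classical
  obtain ⟨S, hS⟩ := Module.Finite.fg_top (R := Lam k μ) (M := M)
  have hTfin : ((S : Set M) ∪ ⋃ i : Fin μ, (fun s => Bmap hβ i s) '' (S : Set M)).Finite :=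
    S.finite_toSet.union (Set.finite_iUnion fun i => S.finite_toSet.image _)
  obtain ⟨W₀, hW₀, hTW⟩ := goodW_finset hβ S hS hTfin.toFinset
  have hDW : Dsub hβ S ≤ W₀ := by
    rw [Dsub, Submodule.span_le]
    intro x hx
    exact hTW (by simpa using hx)
  obtain ⟨hfd₀, hB₀⟩ := hW₀
  have hBW : ∀ i : Fin μ, ∀ x ∈ W₀, Bmap hβ i x ∈ W₀ := fun i x hx => by
    have h := hB₀ i x hx
    rwa [sup_eq_left.2 hDW] at h
  set A : Submodule k M := W₀ ⊔ ⨆ i : Fin μ, Submodule.map (Lsm (gel k μ i - 1)) W₀ with hA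
  have hBA : ∀ i : Fin μ, ∀ x ∈ A, Bmap hβ i x ∈ W₀ := by
    intro i
    have key : A ≤ Submodule.comap (Bmap hβ i) W₀ := by
      refine sup_le (fun x hx => Submodule.mem_comap.2 (hBW i x hx)) (iSup_le fun j => ?_)
      refine Submodule.map_le_iff_le_comap.2 fun w hw =>
        Submodule.mem_comap.2 (Submodule.mem_comap.2 ?_)
      show Bmap hβ i (Lsm (gel k μ j - 1) w) ∈ W₀
      rw [Bmap_apply, Lsm_apply, betaInv_tsmul]
      by_cases hij : i = j
      · subst hij; rw [Pi.single_eq_same]; exact hw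
      · rw [Pi.single_eq_of_ne hij]; exact Submodule.zero_mem _
    exact fun x hx => Submodule.mem_comap.1 (key hx)
  refine ⟨A, ?_, ?_, ?_, ?_⟩
  · rw [hA]; infer_instance
  · intro i x hx
    show (gel k μ i - 1) • betaInv k μ hβ x i ∈ A
    have h1 : Bmap hβ i x ∈ W₀ := hBA i x hx
    have h2 : (gel k μ i - 1) • betaInv k μ hβ x i ∈
        Submodule.map (Lsm (gel k μ i - 1)) W₀ := ⟨_, h1, rfl⟩
    exact Submodule.mem_sup_right (Submodule.mem_iSup_of_mem i h2)
  · intro x hx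
    show (∑ i, betaInv k μ hβ x i) ∈ A
    exact Submodule.mem_sup_left (Submodule.sum_mem _ fun i _ => hBA i x hx)
  · rw [eq_top_iff, ← hS]
    refine Submodule.span_le.2 fun s hs => Submodule.subset_span ?_
    have hsD : s ∈ Dsub hβ S := Submodule.subset_span (Set.mem_union_left _ hs)
    exact Submodule.mem_sup_left (hDW hsD)
end
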